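/- Let b1, b2 ∈ ℝ and n, m ∈ ℕ satisfy b1·(1−n) = b2·(1−m). If (z, w) is a (smooth, positive-valued) solution of the system z_t = d1·((z^n/w^m)·w_x)_x, w_t = d2·((w^m/z^n)·z_x)_x, then u(x,t) = e^(b1·t)·z(x,t), v(x,t) = e^(b2·t)·w(x,t) satisfies u_t = b1·u + d1·((u^n/v^m)·v_x)_x and v_t = b2·v + d2·((v^m/u^n)·u_x)_x. -/

import Mathlib

private lemma key_aux (d b1 b2 : ℝ) (n m : ℕ)
    (hb : b1 * n + b2 - b2 * m = b1)
    (z w : ℝ → ℝ → ℝ)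
    (hz : ContDiff ℝ (⊤ : ℕ∞) (fun p : ℝ × ℝ => z p.1 p.2))
    (hw : ContDiff ℝ (⊤ : ℕ∞) (fun p : ℝ × ℝ => w p.1 p.2))
    (hwpos : ∀ x t, 0 < w x t)
    (hpde : ∀ x t : ℝ, deriv (fun s => z x s) t
      = d * deriv (fun y => (z y t) ^ n / (w y t) ^ m * deriv (fun y' => w y' t) y) x)
    (x t : ℝ) :
    deriv (fun s => Real.exp (b1 * s) * z x s) t
      = b1 * (Real.exp (b1 * t) * z x t)
        + d * deriv (fun y => (Real.exp (b1 * t) * z y t) ^ n / (Real.exp (b2 * t) * w y t) ^ m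
            * deriv (fun y' => Real.exp (b2 * t) * w y' t) y) x := by
  have hz1 : ∀ t, ContDiff ℝ (⊤ : ℕ∞) (fun y => z y t) := fun t => hz.comp (contDiff_id.prodMk contDiff_const)
  have hw1 : ∀ t, ContDiff ℝ (⊤ : ℕ∞) (fun y => w y t) := fun t => hw.comp (contDiff_id.prodMk contDiff_const)
  have hz2 : ∀ x, ContDiff ℝ (⊤ : ℕ∞) (fun s => z x s) := fun x => hz.comp (contDiff_const.prodMk contDiff_id)
  -- derivative of w in x is smooth
  have hwd : ContDiff ℝ (↑(⊤:ℕ∞)) (deriv (fun y => w y t)) :=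
    (contDiff_infty_iff_deriv.mp ((hw1 t).of_le (by simp))).2
  set g : ℝ → ℝ := fun y => (z y t) ^ n / (w y t) ^ m * deriv (fun y' => w y' t) y with hg_def
  have hg : DifferentiableAt ℝ g x := by
    apply DifferentiableAt.mul
    · exact DifferentiableAt.div (((hz1 t).differentiable (by simp) x).pow n)
        (((hw1 t).differentiable (by simp) x).pow m) (pow_ne_zero _ (hwpos x t).ne')
    · exact hwd.differentiable (by simp) x
  -- time derivative
  have he : HasDerivAt (fun s => Real.exp (b1 * s)) (Real.exp (b1 * t) * b1) t := by
    have h1 : HasDerivAt (fun s : ℝ => b1 * s) b1 t := by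
      simpa using (hasDerivAt_id t).const_mul b1
    exact (Real.hasDerivAt_exp (b1 * t)).comp t h1
  have hzt : HasDerivAt (fun s => z x s) (deriv (fun s => z x s) t) t :=
    (((hz2 x).differentiable (by simp)) t).hasDerivAt
  have hmul : HasDerivAt (fun s => Real.exp (b1 * s) * z x s) _ t := he.mul hzt
  rw [hmul.deriv]
  -- the spatial function is exp(b1 t) * g
  have hfun : (fun y => (Real.exp (b1 * t) * z y t) ^ n / (Real.exp (b2 * t) * w y t) ^ m
      * deriv (fun y' => Real.exp (b2 * t) * w y' t) y)
      = fun y => Real.exp (b1 * t) * g y := by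
    funext y
    have hderiv : deriv (fun y' => Real.exp (b2 * t) * w y' t) y
        = Real.exp (b2 * t) * deriv (fun y' => w y' t) y :=
      deriv_const_mul _ ((hw1 t).differentiable (by simp) y)
    rw [hderiv]
    have hE : Real.exp (b1 * t) ^ n * Real.exp (b2 * t)
        = Real.exp (b1 * t) * Real.exp (b2 * t) ^ m := by
      rw [← Real.exp_nat_mul, ← Real.exp_nat_mul, ← Real.exp_add, ← Real.exp_add]
      congr 1
      linear_combination t * hb
    have hwne : (w y t) ^ m ≠ 0 := pow_ne_zero _ (hwpos y t).ne'
    have hEne : Real.exp (b2 * t) ^ m ≠ 0 := pow_ne_zero _ (Real.exp_ne_zero _)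
    simp only [hg_def, mul_pow]
    field_simp
    rw [mul_comm t b2]
    linear_combination (z y t ^ n * deriv (fun y' => w y' t) y) * hE
  rw [hfun, deriv_const_mul _ hg, hpde x t]
  ring

/-- Example 4: if b1 (1-n) = b2 (1-m) and (z, w) solves the reaction-free
    cross-diffusion system, then u = e^(b1 t) z, v = e^(b2 t) w solves the system
    with linear reaction terms. -/
theorem stmt_10 (d1 d2 b1 b2 : ℝ) (n m : ℕ)
    (hb : b1 * (1 - (n : ℝ)) = b2 * (1 - (m : ℝ)))
    (z w : ℝ → ℝ → ℝ)
    (hz : ContDiff ℝ (⊤ : ℕ∞) (fun p : ℝ × ℝ => z p.1 p.2))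
    (hw : ContDiff ℝ (⊤ : ℕ∞) (fun p : ℝ × ℝ => w p.1 p.2))
    (hzpos : ∀ x t, 0 < z x t) (hwpos : ∀ x t, 0 < w x t)
    (hzpde : ∀ x t : ℝ, deriv (fun s => z x s) t
      = d1 * deriv (fun y => (z y t) ^ n / (w y t) ^ m * deriv (fun y' => w y' t) y) x)
    (hwpde : ∀ x t : ℝ, deriv (fun s => w x s) t
      = d2 * deriv (fun y => (w y t) ^ m / (z y t) ^ n * deriv (fun y' => z y' t) y) x)
    (u v : ℝ → ℝ → ℝ)
    (hu : ∀ x t, u x t = Real.exp (b1 * t) * z x t)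
    (hv : ∀ x t, v x t = Real.exp (b2 * t) * w x t) :
    ∀ x t : ℝ,
      deriv (fun s => u x s) t
        = b1 * u x t
          + d1 * deriv (fun y => (u y t) ^ n / (v y t) ^ m * deriv (fun y' => v y' t) y) x ∧
      deriv (fun s => v x s) t
        = b2 * v x t
          + d2 * deriv (fun y => (v y t) ^ m / (u y t) ^ n * deriv (fun y' => u y' t) y) x := by
  intro x t
  have hu' : (fun x t => u x t) = fun x t => Real.exp (b1 * t) * z x t := by
    funext a b; exact hu a b
  have hv' : (fun x t => v x t) = fun x t => Real.exp (b2 * t) * w x t := by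
    funext a b; exact hv a b
  simp only [hu, hv]
  constructor
  · exact key_aux d1 b1 b2 n m (by linarith [hb]) z w hz hw hwpos hzpde x t
  · exact key_aux d2 b2 b1 m n (by linarith [hb]) w z hw hz hzpos hwpde x t
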